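/- arXiv:1611.07199 — 6 statements merged into one kernel-verified Lean document; each statement's English description precedes it below -/
import Mathlib

section
/- Grothendieck's lemma: a subset W of a Banach space X is relatively weakly compact if and only if for every ε > 0 there exists a relatively weakly compact set W_ε ⊆ X such that W ⊆ W_ε + ε B_X. -/
/-!
Embed `X` into its bidual with the weak-* topology; on `X` this induces the weak topology, so `W`
is relatively weakly compact iff the weak-* closure of its image is compact and stays inside `X`.
If `W ⊆ Wε + ε B_X`, that closure lies in `Kε + ε B_{X**}`, where `Kε` is the (compact) weak-*
closure of the image of `Wε`; by Banach–Alaoglu this sum is weak-* compact, so it is closed and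
contains the closure of the image of `W`. Hence every point of that closure is within norm
distance `ε` of `X`, for every `ε > 0`, and lies in `X` because `X` is complete.
-/

open MeasureTheory Filter Set ENNReal Pointwise

noncomputable section

/-- A subset of a normed space is *weakly compact* if its image in the weak space is compact. -/
def IsWeaklyCompact {X : Type*} [NormedAddCommGroup X] [NormedSpace ℝ X] (W : Set X) : Prop :=
  IsCompact (toWeakSpace ℝ X '' W)

/-- A subset is *relatively weakly compact* if its closure in the weak topology is compact. -/
def IsRelWeaklyCompact {X : Type*} [NormedAddCommGroup X] [NormedSpace ℝ X] (W : Set X) : Prop :=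
  IsCompact (closure (toWeakSpace ℝ X '' W))

open Metric NormedSpace Topology

theorem Topology.IsEmbedding.isCompact_closure_iff {A B : Type*} [TopologicalSpace A]
    [TopologicalSpace B] [T2Space B] {f : A → B} (hf : IsEmbedding f) {s : Set A} :
    IsCompact (closure s) ↔ IsCompact (closure (f '' s)) ∧ closure (f '' s) ⊆ range f := by
  refine ⟨fun hs => ?_, fun ⟨hc, hr⟩ => ?_⟩
  · have hsub : closure (f '' s) ⊆ f '' closure s :=
      closure_minimal (image_mono subset_closure) (hs.image hf.continuous).isClosed
    exact ⟨(hs.image hf.continuous).of_isClosed_subset isClosed_closure hsub,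
      hsub.trans (image_subset_range f _)⟩
  · rw [hf.closure_eq_preimage_closure_image]
    exact hf.isInducing.isCompact_preimage' hc hr

namespace WeakDual

variable {𝕜 E : Type*} [NontriviallyNormedField 𝕜] [ProperSpace 𝕜] [SeminormedAddCommGroup E]
  [NormedSpace 𝕜 E]

theorem closure_subset_add_closedBall {K S : Set (WeakDual 𝕜 E)} (hK : IsCompact K) {ε : ℝ}
    (hS : S ⊆ K + toStrongDual ⁻¹' closedBall 0 ε) :
    closure S ⊆ K + toStrongDual ⁻¹' closedBall 0 ε :=
  closure_minimal hS (hK.add (isCompact_closedBall 0 ε)).isClosed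

end WeakDual

section Bidual

variable {X : Type*} [NormedAddCommGroup X] [NormedSpace ℝ X]

theorem isRelWeaklyCompact_iff_bidual (W : Set X) :
    IsRelWeaklyCompact W ↔
      IsCompact (closure (inclusionInDoubleDualWeak ℝ X '' (toWeakSpace ℝ X '' W))) ∧
        closure (inclusionInDoubleDualWeak ℝ X '' (toWeakSpace ℝ X '' W)) ⊆
          range (inclusionInDoubleDualWeak ℝ X) :=
  (isEmbedding_inclusionInDoubleDualWeak ℝ X).isCompact_closure_iff

theorem IsRelWeaklyCompact.exists_isCompact_bidual_add_closedBall {W Wε : Set X} {ε : ℝ}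
    (hWε : IsRelWeaklyCompact Wε) (hW : W ⊆ Wε + closedBall 0 ε) :
    ∃ K ⊆ range (inclusionInDoubleDualWeak ℝ X), IsCompact K ∧
      inclusionInDoubleDualWeak ℝ X '' (toWeakSpace ℝ X '' W) ⊆
        K + WeakDual.toStrongDual ⁻¹' closedBall 0 ε := by
  obtain ⟨hK, hKJ⟩ := (isRelWeaklyCompact_iff_bidual Wε).mp hWε
  refine ⟨_, hKJ, hK, ?_⟩
  rintro _ ⟨_, ⟨w, hw, rfl⟩, rfl⟩
  obtain ⟨a, ha, b, hb, rfl⟩ := hW hw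
  rw [map_add, map_add]
  refine add_mem_add (subset_closure ⟨_, ⟨a, ha, rfl⟩, rfl⟩) ?_
  exact mem_closedBall_zero_iff (E := StrongDual ℝ (StrongDual ℝ X)) |>.mpr
    (((inclusionInDoubleDualLi ℝ).norm_map b).trans_le (mem_closedBall_zero_iff.mp hb))

theorem mem_range_inclusionInDoubleDualWeak_of_forall_mem_add_closedBall [CompleteSpace X]
    {φ : WeakDual ℝ (StrongDual ℝ X)}
    (h : ∀ ε > 0, ∃ K ⊆ range (inclusionInDoubleDualWeak ℝ X),
      φ ∈ K + WeakDual.toStrongDual ⁻¹' closedBall 0 ε) :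
    φ ∈ range (inclusionInDoubleDualWeak ℝ X) := by
  have hclosed : IsClosed (range (inclusionInDoubleDualLi ℝ (E := X))) :=
    (inclusionInDoubleDualLi ℝ (E := X)).isometry.isUniformInducing.isComplete_range.isClosed
  have hφ : WeakDual.toStrongDual φ ∈ closure (range (inclusionInDoubleDualLi ℝ (E := X))) := by
    refine (mem_closure_iff_nhds_basis (nhds_basis_closedBall (x := WeakDual.toStrongDual φ))).mpr
      fun ε hε => ?_
    obtain ⟨K, hKJ, ψ, hψ, β, hβ, rfl⟩ := h ε hε
    obtain ⟨x, rfl⟩ := hKJ hψ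
    refine ⟨_, ⟨toWeakSpace ℝ X |>.symm x, rfl⟩, ?_⟩
    exact (dist_self_add_right _ _).trans_le
      (mem_closedBall_zero_iff (E := StrongDual ℝ (StrongDual ℝ X)) |>.mp hβ)
  obtain ⟨x, hx⟩ := hclosed.closure_eq ▸ hφ
  exact ⟨toWeakSpace ℝ X x, WeakDual.toStrongDual.injective hx⟩

end Bidual

/-- Grothendieck's lemma: a subset `W` of a Banach space `X` is relatively weakly compact
iff for every `ε > 0` there is a relatively weakly compact set `Wε` with `W ⊆ Wε + ε B_X`. -/
theorem grothendieck_lemma {X : Type*} [NormedAddCommGroup X] [NormedSpace ℝ X]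
    [CompleteSpace X] (W : Set X) :
    IsRelWeaklyCompact W ↔ ∀ ε : ℝ, 0 < ε → ∃ Wε : Set X,
      IsRelWeaklyCompact Wε ∧ W ⊆ Wε + Metric.closedBall (0 : X) ε := by
  refine ⟨fun hW ε hε => ⟨W, hW, subset_add_left W (by simp [hε.le])⟩, fun h => ?_⟩
  choose Wε hWε hW using h
  have hcover (ε : ℝ) (hε : 0 < ε) := (hWε ε hε).exists_isCompact_bidual_add_closedBall (hW ε hε)
  rw [isRelWeaklyCompact_iff_bidual]
  refine ⟨?_, fun φ hφ =>
    mem_range_inclusionInDoubleDualWeak_of_forall_mem_add_closedBall fun ε hε => ?_⟩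
  · obtain ⟨K, -, hK, hWK⟩ := hcover 1 one_pos
    exact (hK.add (WeakDual.isCompact_closedBall 0 1)).of_isClosed_subset isClosed_closure
      (WeakDual.closure_subset_add_closedBall hK hWK)
  · obtain ⟨K, hKJ, hK, hWK⟩ := hcover ε hε
    exact ⟨K, hKJ, WeakDual.closure_subset_add_closedBall hK hWK hφ⟩
end
end

section
/- Let (Ω,Σ,μ) be a probability space, X a Banach space, and K ⊆ L¹(μ,X). Then K is a δS-set if and only if K is uniformly integrable and for every δ > 0 and every ε > 0 there exists a weakly compact set W ⊆ X such that μ(f⁻¹(W + ε B_X)) ≥ 1 − δ for every f ∈ K. -/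
/-!
The forward implication holds because `W ⊆ W + ε B_X`. Conversely, choose weakly compact
`Wₙ` with `μ (f ∉ Wₙ + (n+1)⁻¹ B_X) ≤ ηₙ` for all `f ∈ K`, where `∑ ηₙ < δ`. The set
`W = ⋂ₙ (Wₙ + (n+1)⁻¹ B_X)` then satisfies `μ (f ∉ W) ≤ δ`, and it is weakly compact by
Grothendieck's argument: along an ultrafilter on `W`, the weak limits `xₙ ∈ Wₙ` of the
`(n+1)⁻¹`-close approximants form a norm-Cauchy sequence, because the norm is weakly lower
semicontinuous, and the norm limit of `xₙ` is the weak limit of the ultrafilter.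
-/

open MeasureTheory Filter Set ENNReal Pointwise

noncomputable section

variable {Ω : Type*} [MeasurableSpace Ω] {X : Type*} [NormedAddCommGroup X] [NormedSpace ℝ X]

/-- A set of functions in `L¹(μ,X)` is uniformly integrable if it is bounded and the integrals
of the norms over small sets are uniformly small. -/
def UnifIntegrableSet (μ : Measure Ω) (K : Set (Lp X 1 μ)) : Prop :=
  (∃ C : ℝ, ∀ f ∈ K, ‖f‖ ≤ C) ∧
  ∀ ε : ℝ, 0 < ε → ∃ δ : ℝ, 0 < δ ∧ ∀ f ∈ K, ∀ A : Set Ω, μ A ≤ ENNReal.ofReal δ →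
    ∫ ω in A, ‖(f : Ω → X) ω‖ ∂μ ≤ ε

/-- `K ⊆ L¹(μ,X)` is a δS-set if it is uniformly integrable and for every `δ > 0` there is a
weakly compact `W ⊆ X` with `μ (f ⁻¹' W) ≥ 1 - δ` for all `f ∈ K`. -/
def IsDeltaSSet (μ : Measure Ω) (K : Set (Lp X 1 μ)) : Prop :=
  UnifIntegrableSet μ K ∧
  ∀ δ : ℝ, 0 < δ → ∃ W : Set X, IsWeaklyCompact W ∧
    ∀ f ∈ K, 1 - ENNReal.ofReal δ ≤ μ ((f : Ω → X) ⁻¹' W)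

/-- A Banach space `X` has property (δSμ) if every relatively weakly compact subset of
`L¹(μ,X)` is a δS-set. -/
def DeltaSProp (μ : Measure Ω) (X : Type*) [NormedAddCommGroup X] [NormedSpace ℝ X] : Prop :=
  ∀ K : Set (Lp X 1 μ), IsRelWeaklyCompact K → IsDeltaSSet μ K


open Topology

theorem tendsto_toWeakSpace_iff {α : Type*} {l : Filter α} {f : α → X} {x : X} :
    Tendsto (fun a => toWeakSpace ℝ X (f a)) l (𝓝 (toWeakSpace ℝ X x)) ↔
      ∀ φ : StrongDual ℝ X, Tendsto (fun a => φ (f a)) l (𝓝 (φ x)) :=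
  (IsInducing.induced fun (v : WeakSpace ℝ X) (φ : StrongDual ℝ X) =>
    (topDualPairing ℝ X).flip v φ).tendsto_nhds_iff.trans tendsto_pi_nhds

theorem Convex.isClosed_image_toWeakSpace {s : Set X} (hs : Convex ℝ s) (hc : IsClosed s) :
    IsClosed (toWeakSpace ℝ X '' s) := by
  rw [← closure_eq_iff_isClosed, ← hs.toWeakSpace_closure ℝ, hc.closure_eq]

theorem isClosed_of_isClosed_image_toWeakSpace {s : Set X}
    (hs : IsClosed (toWeakSpace ℝ X '' s)) : IsClosed s := by
  have := hs.preimage (toWeakSpaceCLM ℝ X).continuous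
  rwa [show ⇑(toWeakSpaceCLM ℝ X) = toWeakSpace ℝ X from rfl,
    (toWeakSpace ℝ X).injective.preimage_image] at this

theorem norm_le_of_tendsto_toWeakSpace {α : Type*} {l : Filter α} [l.NeBot] {f : α → X} {x : X}
    {r : ℝ} (hf : Tendsto (fun a => toWeakSpace ℝ X (f a)) l (𝓝 (toWeakSpace ℝ X x)))
    (hr : ∀ᶠ a in l, ‖f a‖ ≤ r) : ‖x‖ ≤ r := by
  have hball := (convex_closedBall (0 : X) r).isClosed_image_toWeakSpace Metric.isClosed_closedBall
  obtain ⟨y, hy, hyx⟩ :=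
    hball.mem_of_tendsto hf (hr.mono fun a ha => ⟨f a, by simpa using ha, rfl⟩)
  simpa [(toWeakSpace ℝ X).injective hyx] using hy

theorem IsWeaklyCompact.isClosed_image_add_closedBall {W : Set X} (hW : IsWeaklyCompact W)
    (r : ℝ) : IsClosed (toWeakSpace ℝ X '' (W + Metric.closedBall 0 r)) := by
  rw [Set.image_add]
  exact ((convex_closedBall (0 : X) r).isClosed_image_toWeakSpace
    Metric.isClosed_closedBall).add_left_of_isCompact hW

theorem exists_tendsto_toWeakSpace_of_tendstoUniformlyOnFilter [CompleteSpace X] {α : Type*}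
    {l : Filter α} [l.NeBot] {g : ℕ → α → X} {u : α → X} {x : ℕ → X}
    (hgu : TendstoUniformlyOnFilter g u atTop l)
    (hgx : ∀ n, Tendsto (fun a => toWeakSpace ℝ X (g n a)) l (𝓝 (toWeakSpace ℝ X (x n)))) :
    ∃ z, Tendsto (fun a => toWeakSpace ℝ X (u a)) l (𝓝 (toWeakSpace ℝ X z)) := by
  have hx : CauchySeq x := by
    refine Metric.cauchySeq_iff'.2 fun r hr => ?_
    obtain ⟨N, hN⟩ := eventually_atTop.1
      (Metric.tendstoUniformlyOnFilter_iff.1 hgu (r / 3) (by positivity)).curry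
    refine ⟨N, fun n hn => ?_⟩
    have hsub : Tendsto (fun a => toWeakSpace ℝ X (g n a - g N a)) l
        (𝓝 (toWeakSpace ℝ X (x n - x N))) := by
      simpa only [map_sub] using (hgx n).sub (hgx N)
    have hclose : ∀ᶠ a in l, ‖g n a - g N a‖ ≤ 2 * r / 3 := by
      filter_upwards [hN n hn, hN N le_rfl] with a han haN
      rw [← dist_eq_norm]
      linarith [dist_triangle_left (g n a) (g N a) (u a)]
    rw [dist_eq_norm]
    linarith [norm_le_of_tendsto_toWeakSpace hsub hclose]
  obtain ⟨z, hz⟩ := cauchySeq_tendsto_of_complete hx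
  refine ⟨z, tendsto_toWeakSpace_iff.2 fun φ => ?_⟩
  exact (φ.uniformContinuous.comp_tendstoUniformlyOnFilter hgu).tendsto_of_eventually_tendsto
    (.of_forall fun n => tendsto_toWeakSpace_iff.1 (hgx n) φ) ((φ.continuous.tendsto z).comp hz)

theorem isWeaklyCompact_iInter_add_closedBall [CompleteSpace X] {C : ℕ → Set X}
    (hC : ∀ n, IsWeaklyCompact (C n)) {ε : ℕ → ℝ} (hε : Tendsto ε atTop (𝓝 0)) :
    IsWeaklyCompact (⋂ n, C n + Metric.closedBall (0 : X) (ε n)) := by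
  set V := ⋂ n, C n + Metric.closedBall (0 : X) (ε n)
  set T := toWeakSpace ℝ X
  have hV : IsClosed (toWeakSpace ℝ X '' V) := by
    rw [image_iInter T.bijective]
    exact isClosed_iInter fun n => (hC n).isClosed_image_add_closedBall (ε n)
  have happrox : ∀ n (v : X), ∃ c, v ∈ V → c ∈ C n ∧ dist v c ≤ ε n := by
    intro n v
    by_cases hv : v ∈ V
    · obtain ⟨c, hc, b, hb, rfl⟩ := mem_iInter.1 hv n
      exact ⟨c, fun _ => ⟨hc, by simpa [dist_eq_norm] using hb⟩⟩
    · exact ⟨v, fun h => absurd h hv⟩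
  choose g hg using happrox
  rw [IsWeaklyCompact, isCompact_iff_ultrafilter_le_nhds']
  intro F hF
  have hFV : ∀ᶠ v in (F : Filter (WeakSpace ℝ X)), T.symm v ∈ V := by
    filter_upwards [hF] with v ⟨w, hw, hwv⟩
    rwa [← hwv, T.symm_apply_apply]
  have hlim : ∀ n, ∃ x, Tendsto (fun v => T (g n (T.symm v))) F (𝓝 (T x)) := by
    intro n
    obtain ⟨y, -, hy⟩ := (hC n).ultrafilter_le_nhds (F.map fun v => T (g n (T.symm v))) <| by
      rw [le_principal_iff, Ultrafilter.mem_coe, Ultrafilter.mem_map]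
      filter_upwards [hFV] with v hv using mem_image_of_mem T (hg n _ hv).1
    exact ⟨T.symm y, by rwa [T.apply_symm_apply]⟩
  choose x hx using hlim
  have hunif : TendstoUniformlyOnFilter (fun n v => g n (T.symm v)) T.symm atTop F := by
    refine Metric.tendstoUniformlyOnFilter_iff.2 fun r hr => ?_
    filter_upwards [(hε.eventually (gt_mem_nhds hr)).prod_mk hFV] with ⟨n, v⟩ ⟨hn, hv⟩
    exact (hg n _ hv).2.trans_lt hn
  obtain ⟨z, hz⟩ := exists_tendsto_toWeakSpace_of_tendstoUniformlyOnFilter hunif hx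
  simp only [T, LinearEquiv.apply_symm_apply] at hz
  exact ⟨T z, hV.mem_of_tendsto hz hF, hz⟩

theorem one_sub_tsum_le_measure_iInter {ι : Type*} [Countable ι]
    {μ : Measure Ω} [IsProbabilityMeasure μ] {s : ι → Set Ω} (hs : ∀ i, MeasurableSet (s i))
    {a : ι → ℝ≥0∞} (ha : ∀ i, 1 - a i ≤ μ (s i)) : 1 - ∑' i, a i ≤ μ (⋂ i, s i) := by
  rw [tsub_le_iff_tsub_le, ← prob_compl_eq_one_sub (.iInter hs), compl_iInter]
  refine (measure_iUnion_le _).trans (ENNReal.tsum_le_tsum fun i => ?_)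
  rw [prob_compl_eq_one_sub (hs i)]
  exact tsub_le_iff_tsub_le.1 (ha i)

/-- `K ⊆ L¹(μ,X)` is a δS-set iff it is uniformly integrable and for every `δ > 0` and `ε > 0`
there is a weakly compact `W ⊆ X` with `μ (f ⁻¹' (W + ε B_X)) ≥ 1 - δ` for all `f ∈ K`. -/
theorem isDeltaSSet_iff_enlarged (μ : Measure Ω) [IsProbabilityMeasure μ] [CompleteSpace X]
    (K : Set (Lp X 1 μ)) :
    IsDeltaSSet μ K ↔ UnifIntegrableSet μ K ∧
      ∀ δ : ℝ, 0 < δ → ∀ ε : ℝ, 0 < ε → ∃ W : Set X, IsWeaklyCompact W ∧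
        ∀ f ∈ K, 1 - ENNReal.ofReal δ ≤ μ ((f : Ω → X) ⁻¹' (W + Metric.closedBall (0 : X) ε)) := by
  refine ⟨fun ⟨hK, hW⟩ => ⟨hK, fun δ hδ ε hε => ?_⟩, fun ⟨hK, hW⟩ => ⟨hK, fun δ hδ => ?_⟩⟩
  · obtain ⟨W, hWc, hWμ⟩ := hW δ hδ
    exact ⟨W, hWc, fun f hf => (hWμ f hf).trans <| measure_mono <| preimage_mono <|
      subset_add_left W (Metric.mem_closedBall_self hε.le)⟩
  · borelize X
    obtain ⟨η, hη, hηδ⟩ := ENNReal.exists_pos_sum_of_countable (ofReal_pos.2 hδ).ne' ℕ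
    choose W hWc hWμ using fun n : ℕ => hW (η n) (hη n) (1 / (n + 1)) Nat.one_div_pos_of_nat
    refine ⟨⋂ n, W n + Metric.closedBall 0 (1 / (n + 1)),
      isWeaklyCompact_iInter_add_closedBall hWc tendsto_one_div_add_atTop_nhds_zero_nat,
      fun f hf => ?_⟩
    rw [preimage_iInter]
    refine (tsub_le_tsub_left hηδ.le 1).trans (one_sub_tsum_le_measure_iInter (fun n => ?_)
      fun n => by simpa using hWμ n f hf)
    have hclosed := isClosed_of_isClosed_image_toWeakSpace
      ((hWc n).isClosed_image_add_closedBall (1 / (n + 1)))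
    exact (Lp.stronglyMeasurable f).measurable hclosed.measurableSet
end
end

section
/- Let (Ω,Σ,μ) be a probability space, X a Banach space, and f: Ω → X a strongly measurable function. Then for every measurable set A ∈ Σ there exists a sequence of simple functions f_n: Ω → X such that (1) f_n → f μ-almost everywhere, (2) ‖f_n(ω)‖ ≤ 1/n + ‖f(ω)‖ for every ω ∈ Ω and every n, and (3) f_n(A) ⊆ f(A) ∪ {0} for every n. -/
/-!
Replace `f` by a strongly measurable `g` that agrees with `f` almost everywhere and vanishes
elsewhere. On `A`, the nearest-point approximations of `A.indicator g` with values in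
`g '' A ∪ {0}` (`SimpleFunc.approxOn`) converge to `g` pointwise, hence in measure. Pick a
subsequence along which the set where the approximation is at least `εₙ` away from `g` has
measure `< 2⁻ⁿ`, and set the approximation to `0` there: by Borel–Cantelli this changes
nothing eventually, almost everywhere, and wherever the approximation is kept its norm is at
most `εₙ + ‖g‖`. Off `A` the same construction is run for `g` itself.
-/

open MeasureTheory Filter Set

noncomputable section

open scoped ENNReal Topology

namespace MeasureTheory

variable {Ω X : Type*} [MeasurableSpace Ω] {μ : Measure Ω}

theorem AEStronglyMeasurable.exists_stronglyMeasurable_ae_eq_and_eq_or_eq_zero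
    [TopologicalSpace X] [Zero X] {f : Ω → X} (hf : AEStronglyMeasurable f μ) :
    ∃ g : Ω → X, StronglyMeasurable g ∧ f =ᵐ[μ] g ∧ ∀ ω, g ω = f ω ∨ g ω = 0 := by
  set N := toMeasurable μ {ω | f ω ≠ hf.mk f ω}
  have hN : μ N = 0 := by rw [measure_toMeasurable]; exact hf.ae_eq_mk
  refine ⟨Nᶜ.indicator (hf.mk f),
    hf.stronglyMeasurable_mk.indicator (measurableSet_toMeasurable _ _).compl, ?_, fun ω => ?_⟩
  · filter_upwards [measure_eq_zero_iff_ae_notMem.mp hN, hf.ae_eq_mk] with ω hω hfω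
    rw [indicator_of_mem hω, hfω]
  · by_cases hω : ω ∈ N
    · exact Or.inr (indicator_of_notMem (notMem_compl_iff.mpr hω) _)
    · refine Or.inl ((indicator_of_mem hω _).trans ?_)
      by_contra h
      exact hω (subset_toMeasurable μ _ (Ne.symm h))

variable [NormedAddCommGroup X]

namespace SimpleFunc

def nearOrZero (φ : SimpleFunc Ω X) {g : Ω → X} (hg : StronglyMeasurable g) (ε : ℝ) : SimpleFunc Ω X :=
  piecewise {ω | dist (φ ω) (g ω) < ε}
    (measurableSet_lt (φ.stronglyMeasurable.dist hg).measurable measurable_const) φ 0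

variable {φ : SimpleFunc Ω X} {g : Ω → X} {hg : StronglyMeasurable g} {ε : ℝ} {ω : Ω}

theorem nearOrZero_apply_of_dist_lt (h : dist (φ ω) (g ω) < ε) :
    φ.nearOrZero hg ε ω = φ ω := by
  rw [nearOrZero, piecewise_apply]
  exact if_pos h

theorem nearOrZero_apply_of_not_dist_lt (h : ¬dist (φ ω) (g ω) < ε) :
    φ.nearOrZero hg ε ω = 0 := by
  rw [nearOrZero, piecewise_apply]
  exact if_neg h

theorem nearOrZero_apply_eq_or_eq_zero :
    φ.nearOrZero hg ε ω = φ ω ∨ φ.nearOrZero hg ε ω = 0 :=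
  (em _).imp nearOrZero_apply_of_dist_lt nearOrZero_apply_of_not_dist_lt

theorem norm_nearOrZero_le (hε : 0 ≤ ε) : ‖φ.nearOrZero hg ε ω‖ ≤ ε + ‖g ω‖ := by
  by_cases h : dist (φ ω) (g ω) < ε
  · rw [nearOrZero_apply_of_dist_lt h]
    linarith [norm_le_norm_add_norm_sub' (φ ω) (g ω), dist_eq_norm (φ ω) (g ω)]
  · rw [nearOrZero_apply_of_not_dist_lt h, norm_zero]
    positivity

end SimpleFunc

open SimpleFunc

theorem TendstoInMeasure.exists_tendsto_ae_nearOrZero {ψ : ℕ → SimpleFunc Ω X} {g : Ω → X}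
    (hg : StronglyMeasurable g) (hψ : TendstoInMeasure μ (fun m => ψ m) atTop g)
    {ε : ℕ → ℝ} (hε : ∀ n, 0 < ε n) (hε0 : Tendsto ε atTop (𝓝 0)) :
    ∃ k : ℕ → ℕ, ∀ᵐ ω ∂μ, Tendsto (fun n => (ψ (k n)).nearOrZero hg (ε n) ω) atTop (𝓝 (g ω)) := by
  have hfar : ∀ n, ∃ m, μ {ω | ε n ≤ dist (ψ m ω) (g ω)} < 2⁻¹ ^ n := fun n =>
    ((tendstoInMeasure_iff_dist.mp hψ (ε n) (hε n)).eventually_lt_const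
      (ENNReal.pow_pos (by simp) n)).exists
  choose k hk using hfar
  have hsum : ∑' n, μ {ω | ε n ≤ dist (ψ (k n) ω) (g ω)} ≠ ∞ := by
    refine ne_top_of_le_ne_top ?_ (ENNReal.tsum_le_tsum fun n => (hk n).le)
    simp [ENNReal.tsum_geometric, ENNReal.one_sub_inv_two]
  refine ⟨k, ?_⟩
  filter_upwards [ae_eventually_notMem hsum] with ω hω
  have hnear : ∀ᶠ n in atTop, dist ((ψ (k n)).nearOrZero hg (ε n) ω) (g ω) < ε n := by
    filter_upwards [hω] with n hn
    have hlt : dist (ψ (k n) ω) (g ω) < ε n := not_le.mp hn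
    rwa [nearOrZero_apply_of_dist_lt hlt]
  exact tendsto_iff_dist_tendsto_zero.mpr
    (squeeze_zero' (.of_forall fun _ => dist_nonneg) (hnear.mono fun _ => le_of_lt) hε0)

theorem StronglyMeasurable.exists_simpleFunc_tendsto_ae_norm_le [IsFiniteMeasure μ] {g : Ω → X}
    (hg : StronglyMeasurable g) {ε : ℕ → ℝ} (hε : ∀ n, 0 < ε n) (hε0 : Tendsto ε atTop (𝓝 0)) :
    ∃ φ : ℕ → SimpleFunc Ω X, (∀ᵐ ω ∂μ, Tendsto (fun n => φ n ω) atTop (𝓝 (g ω))) ∧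
      (∀ n ω, ‖φ n ω‖ ≤ ε n + ‖g ω‖) ∧ ∀ n ω, φ n ω ∈ range g ∪ {0} := by
  borelize X
  set s := range g ∪ {0}
  have : TopologicalSpace.SeparableSpace s :=
    (hg.isSeparable_range.union (finite_singleton 0).isSeparable).separableSpace
  set ψ := approxOn g hg.measurable s 0 (subset_union_right rfl)
  have hψ : TendstoInMeasure μ (fun m => ψ m) atTop g :=
    tendstoInMeasure_of_tendsto_ae (fun m => (ψ m).aestronglyMeasurable) <| ae_of_all _
      fun ω => tendsto_approxOn _ _ (subset_closure (subset_union_left (mem_range_self ω)))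
  obtain ⟨k, hk⟩ := hψ.exists_tendsto_ae_nearOrZero hg hε hε0
  refine ⟨fun n => (ψ (k n)).nearOrZero hg (ε n), hk, fun n ω => norm_nearOrZero_le (hε n).le,
    fun n ω => ?_⟩
  rcases nearOrZero_apply_eq_or_eq_zero (φ := ψ (k n)) (hg := hg) (ε := ε n) (ω := ω) with h | h
  · exact h ▸ approxOn_mem ..
  · exact h ▸ subset_union_right rfl

theorem StronglyMeasurable.exists_simpleFunc_tendsto_ae_norm_le_image_subset [IsFiniteMeasure μ]
    {g : Ω → X} (hg : StronglyMeasurable g) {A : Set Ω} (hA : MeasurableSet A) {ε : ℕ → ℝ}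
    (hε : ∀ n, 0 < ε n) (hε0 : Tendsto ε atTop (𝓝 0)) :
    ∃ φ : ℕ → SimpleFunc Ω X, (∀ᵐ ω ∂μ, Tendsto (fun n => φ n ω) atTop (𝓝 (g ω))) ∧
      (∀ n ω, ‖φ n ω‖ ≤ ε n + ‖g ω‖) ∧ ∀ n, φ n '' A ⊆ g '' A ∪ {0} := by
  obtain ⟨φA, hφA_lim, hφA_norm, hφA_mem⟩ :=
    (hg.indicator hA).exists_simpleFunc_tendsto_ae_norm_le (μ := μ) hε hε0
  obtain ⟨φB, hφB_lim, hφB_norm, -⟩ := hg.exists_simpleFunc_tendsto_ae_norm_le (μ := μ) hε hε0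
  refine ⟨fun n => (φA n).piecewise A hA (φB n), ?_, fun n ω => ?_, ?_⟩
  · filter_upwards [hφA_lim, hφB_lim] with ω hωA hωB
    by_cases hω : ω ∈ A
    · simpa [hω] using hωA
    · simpa [hω] using hωB
  · by_cases hω : ω ∈ A
    · simpa [hω] using (hφA_norm n ω).trans (by gcongr; exact norm_indicator_le_norm_self ..)
    · simpa [hω] using hφB_norm n ω
  · rintro n _ ⟨ω, hω, rfl⟩
    rw [piecewise_apply, if_pos hω]
    rcases hφA_mem n ω with ⟨ω', h⟩ | h
    · rw [← h]
      by_cases hω' : ω' ∈ A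
      · exact Or.inl ⟨ω', hω', (indicator_of_mem hω' g).symm⟩
      · exact Or.inr (indicator_of_notMem hω' g)
    · exact Or.inr h

end MeasureTheory

theorem exists_simpleFunc_approx_general {Ω : Type*} [MeasurableSpace Ω]
    {X : Type*} [NormedAddCommGroup X]
    (μ : Measure Ω) [IsProbabilityMeasure μ] (f : Ω → X)
    (hf : ∃ g : ℕ → SimpleFunc Ω X, ∀ᵐ ω ∂μ, Tendsto (fun n => g n ω) atTop (nhds (f ω)))
    (A : Set Ω) (hA : MeasurableSet A) :
    ∃ fn : ℕ → SimpleFunc Ω X,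
      (∀ᵐ ω ∂μ, Tendsto (fun n => fn n ω) atTop (nhds (f ω))) ∧
      (∀ ω : Ω, ∀ n : ℕ, ‖fn n ω‖ ≤ 1 / (n + 1 : ℝ) + ‖f ω‖) ∧
      (∀ n : ℕ, (fn n) '' A ⊆ f '' A ∪ {0}) := by
  obtain ⟨ψ, hψ⟩ := hf
  obtain ⟨g, hg, hfg, hg_eq⟩ :=
    (aestronglyMeasurable_of_tendsto_ae atTop (fun n => (ψ n).aestronglyMeasurable)
      hψ).exists_stronglyMeasurable_ae_eq_and_eq_or_eq_zero
  obtain ⟨φ, hφ_lim, hφ_norm, hφ_image⟩ :=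
    hg.exists_simpleFunc_tendsto_ae_norm_le_image_subset (μ := μ) hA
      (fun n => Nat.one_div_pos_of_nat) tendsto_one_div_add_atTop_nhds_zero_nat
  have hg_norm : ∀ ω, ‖g ω‖ ≤ ‖f ω‖ := fun ω => by
    rcases hg_eq ω with h | h <;> simp [h]
  have hg_image : g '' A ∪ {0} ⊆ f '' A ∪ {0} := by
    rintro _ (⟨ω, hω, rfl⟩ | h)
    · rcases hg_eq ω with h | h
      · exact Or.inl ⟨ω, hω, h.symm⟩
      · exact Or.inr h
    · exact Or.inr h
  refine ⟨φ, ?_, fun ω n => (hφ_norm n ω).trans (by gcongr; exact hg_norm ω),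
    fun n => (hφ_image n).trans hg_image⟩
  filter_upwards [hφ_lim, hfg] with ω hω hfω
  rwa [hfω]

/-- Approximation of a strongly measurable function (an a.e. limit of simple functions)
by simple functions with controlled norms and with values on `A` taken in `f '' A ∪ {0}`. -/
theorem exists_simpleFunc_approx {Ω : Type*} [MeasurableSpace Ω]
    {X : Type*} [NormedAddCommGroup X] [NormedSpace ℝ X]
    (μ : Measure Ω) [IsProbabilityMeasure μ] (f : Ω → X)
    (hf : ∃ g : ℕ → SimpleFunc Ω X, ∀ᵐ ω ∂μ, Tendsto (fun n => g n ω) atTop (nhds (f ω)))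
    (A : Set Ω) (hA : MeasurableSet A) :
    ∃ fn : ℕ → SimpleFunc Ω X,
      (∀ᵐ ω ∂μ, Tendsto (fun n => fn n ω) atTop (nhds (f ω))) ∧
      (∀ ω : Ω, ∀ n : ℕ, ‖fn n ω‖ ≤ 1 / (n + 1 : ℝ) + ‖f ω‖) ∧
      (∀ n : ℕ, (fn n) '' A ⊆ f '' A ∪ {0}) :=
  exists_simpleFunc_approx_general μ f hf A hA
end
end

section
/- Let X be an SWCG Banach space with strongly generating weakly compact set G, which may be taken absolutely convex. Let F: Ω → wk(X) be a multifunction with weakly compact non-empty values such that {ω ∈ Ω : F(ω) ⊆ C} ∈ Σ for every convex closed set C ⊆ X. Then for every δ > 0 there exist A ∈ Σ with μ(A) ≥ 1 − δ and a weakly compact set W ⊆ X such that F(ω) ⊆ W for every ω ∈ A. -/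
open MeasureTheory Filter Set ENNReal Pointwise

noncomputable section

variable {Ω : Type*} [MeasurableSpace Ω] {X : Type*} [NormedAddCommGroup X] [NormedSpace ℝ X]

/-- `G` strongly generates the weakly compact subsets of `X`. -/
def StronglyGenerates {X : Type*} [NormedAddCommGroup X] [NormedSpace ℝ X] (G : Set X) : Prop :=
  IsWeaklyCompact G ∧ ∀ W : Set X, IsWeaklyCompact W → ∀ ε : ℝ, 0 < ε →
    ∃ n : ℕ, W ⊆ (n : ℝ) • G + Metric.closedBall (0 : X) ε

/-! The sets `n • G + (k + 1)⁻¹ • B_X` are closed and convex (a weakly compact set plus a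
weakly closed one is weakly closed), increase with `n` because `G` is balanced, and by strong
generation each `F ω` lies in one of them. Continuity of `μ` from below yields `n_k` such that,
off a set of measure at most `δ`, `F ω ⊆ n_k • G + (k + 1)⁻¹ • B_X` for every `k`. The union of
these `F ω` is thus approximated to any precision by weakly compact sets, so it is relatively
weakly compact by Grothendieck's lemma: its weak-star closure in the bidual lies in the norm
closure of `X`, which is `X` itself since `X` is complete. -/

open Topology

namespace IsWeaklyCompact

variable {K : Set X}

theorem smul (hK : IsWeaklyCompact K) (c : ℝ) : IsWeaklyCompact (c • K) := by
  rw [IsWeaklyCompact, image_smul_set]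
  exact IsCompact.smul c hK

theorem isBounded (hK : IsWeaklyCompact K) : Bornology.IsBounded K := by
  -- uniform boundedness: weak-star bounded subsets of the dual of the Banach space `X*` are bounded
  have hJK : Bornology.IsBounded
      (NormedSpace.inclusionInDoubleDualWeak ℝ X '' (toWeakSpace ℝ X '' K)) :=
    WeakDual.isBounded_iff_isVonNBounded.2
      ((hK.image (map_continuous _)).isVonNBounded ℝ)
  rw [Set.image_image] at hJK
  have hLi : Bornology.IsBounded (NormedSpace.inclusionInDoubleDualLi ℝ (E := X) '' K) := hJK
  exact ((NormedSpace.inclusionInDoubleDualLi ℝ).isometry.antilipschitz.isBounded_preimage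
    hLi).subset (Set.subset_preimage_image _ _)

theorem isClosed_add {C : Set X} (hK : IsWeaklyCompact K) (hCconv : Convex ℝ C)
    (hC : IsClosed C) : IsClosed (K + C) := by
  have hCw : IsClosed (toWeakSpace ℝ X '' C) := by
    rw [← hC.closure_eq, hCconv.toWeakSpace_closure ℝ]
    exact isClosed_closure
  have hsum : IsClosed (toWeakSpace ℝ X '' (K + C)) := by
    rw [Set.image_add]
    exact hCw.add_left_of_isCompact hK
  have h := hsum.preimage (toWeakSpaceCLM ℝ X).continuous
  rwa [← Set.preimage_image_eq (K + C) (toWeakSpace ℝ X).injective]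

end IsWeaklyCompact

section Grothendieck

open NormedSpace WeakDual

theorem norm_toStrongDual_inclusionInDoubleDualWeak (x : X) :
    ‖toStrongDual (inclusionInDoubleDualWeak ℝ X (toWeakSpace ℝ X x))‖ = ‖x‖ :=
  (inclusionInDoubleDualLi ℝ).norm_map x

theorem closure_image_inclusionInDoubleDualWeak_subset_range [CompleteSpace X] {W₀ : Set X}
    (h : ∀ ε > 0, ∃ K, IsWeaklyCompact K ∧ W₀ ⊆ K + Metric.closedBall 0 ε) :
    closure (inclusionInDoubleDualWeak ℝ X '' (toWeakSpace ℝ X '' W₀)) ⊆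
      Set.range (inclusionInDoubleDualWeak ℝ X) := by
  set J := inclusionInDoubleDualWeak ℝ X
  intro y hy
  have hy_mem : toStrongDual y ∈ closure (Set.range (inclusionInDoubleDual ℝ X)) := by
    refine (Metric.mem_closure_iff (α := StrongDual ℝ (StrongDual ℝ X))).2 fun ε hε => ?_
    obtain ⟨K, hK, hW₀K⟩ := h (ε / 2) (half_pos hε)
    set B := toStrongDual ⁻¹' Metric.closedBall (0 : StrongDual ℝ (StrongDual ℝ X)) (ε / 2)
    have hclosed : IsClosed (J '' (toWeakSpace ℝ X '' K) + B) :=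
      ((hK.image J.continuous).add (isCompact_closedBall 0 _)).isClosed
    have hJW₀ : J '' (toWeakSpace ℝ X '' W₀) ⊆ J '' (toWeakSpace ℝ X '' K) + B := by
      rintro _ ⟨_, ⟨x, hx, rfl⟩, rfl⟩
      obtain ⟨k, hk, b, hb, rfl⟩ := hW₀K hx
      refine ⟨J (toWeakSpace ℝ X k), ⟨_, ⟨k, hk, rfl⟩, rfl⟩, J (toWeakSpace ℝ X b), ?_, ?_⟩
      · rw [Set.mem_preimage, Metric.mem_closedBall,
          dist_zero_right (toStrongDual (J (toWeakSpace ℝ X b))),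
          norm_toStrongDual_inclusionInDoubleDualWeak]
        exact mem_closedBall_zero_iff.1 hb
      · simp only [map_add]
    obtain ⟨_, ⟨_, ⟨k, -, rfl⟩, rfl⟩, z, hz, rfl⟩ := closure_minimal hJW₀ hclosed hy
    rw [Set.mem_preimage, Metric.mem_closedBall, dist_zero_right (toStrongDual z)] at hz
    refine ⟨inclusionInDoubleDual ℝ X k, ⟨k, rfl⟩, ?_⟩
    calc dist (inclusionInDoubleDual ℝ X k + toStrongDual z) (inclusionInDoubleDual ℝ X k)
        = ‖toStrongDual z‖ := dist_self_add_left (toStrongDual z) (inclusionInDoubleDual ℝ X k)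
      _ < ε := hz.trans_lt (half_lt_self hε)
  have hrange_closed : IsClosed (Set.range (inclusionInDoubleDual ℝ X)) :=
    (inclusionInDoubleDualLi ℝ (E := X)).isometry.isUniformInducing.isComplete_range.isClosed
  obtain ⟨x, hx⟩ := hrange_closed.closure_eq ▸ hy_mem
  exact ⟨toWeakSpace ℝ X x, toStrongDual.injective hx⟩

theorem exists_isWeaklyCompact_superset_of_subset_add_closedBall [CompleteSpace X]
    {W₀ : Set X} (h : ∀ ε > 0, ∃ K, IsWeaklyCompact K ∧ W₀ ⊆ K + Metric.closedBall 0 ε) :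
    ∃ W, IsWeaklyCompact W ∧ W₀ ⊆ W := by
  obtain ⟨K, hK, hW₀K⟩ := h 1 one_pos
  have hW₀ : Bornology.IsBounded W₀ :=
    (hK.isBounded.add Metric.isBounded_closedBall).subset hW₀K
  have hcomp := isCompact_closure_of_isBounded ℝ X (toWeakSpace ℝ X '' W₀)
    (by rwa [Set.preimage_image_eq _ (toWeakSpace ℝ X).injective])
    (closure_image_inclusionInDoubleDualWeak_subset_range h)
  refine ⟨toWeakSpace ℝ X ⁻¹' closure (toWeakSpace ℝ X '' W₀), ?_,
    Set.image_subset_iff.1 subset_closure⟩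
  rwa [IsWeaklyCompact, Set.image_preimage_eq _ (toWeakSpace ℝ X).surjective]

end Grothendieck

theorem MeasureTheory.exists_measure_compl_iInter_le {ι : Type*} [Countable ι] {μ : Measure Ω}
    [IsFiniteMeasure μ] {S : ι → ℕ → Set Ω}
    (hS : ∀ k n, MeasurableSet (S k n)) (hS_mono : ∀ k, Monotone (S k))
    (hS_cover : ∀ k, ⋃ n, S k n = univ) {ε : ℝ≥0∞} (hε : ε ≠ 0) :
    ∃ n : ι → ℕ, μ (⋂ k, S k (n k))ᶜ ≤ ε := by
  obtain ⟨ε', hε'_pos, hε'_sum⟩ := ENNReal.exists_pos_sum_of_countable hε ι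
  have hsmall : ∀ k, ∃ n, μ (S k n)ᶜ < ε' k := by
    intro k
    have hlim : Tendsto (fun n => μ (S k n)ᶜ) atTop (𝓝 0) := by
      have h := tendsto_measure_iInter_atTop (μ := μ)
        (fun n => (hS k n).compl.nullMeasurableSet)
        (fun a b hab => compl_subset_compl.2 (hS_mono k hab)) ⟨0, measure_ne_top _ _⟩
      rwa [← compl_iUnion, hS_cover k, compl_univ, measure_empty] at h
    exact (hlim.eventually_lt_const (ENNReal.coe_pos.2 (hε'_pos k))).exists
  choose n hn using hsmall
  refine ⟨n, ?_⟩
  calc μ (⋂ k, S k (n k))ᶜ = μ (⋃ k, (S k (n k))ᶜ) := by rw [compl_iInter]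
    _ ≤ ∑' k, μ (S k (n k))ᶜ := measure_iUnion_le _
    _ ≤ ∑' k, (ε' k : ℝ≥0∞) := ENNReal.tsum_le_tsum fun k => (hn k).le
    _ ≤ ε := hε'_sum.le

theorem exists_weaklyCompact_of_multifunction_general (μ : Measure Ω) [IsProbabilityMeasure μ]
    [CompleteSpace X] (G : Set X) (hG : StronglyGenerates G)
    (hGconv : Balanced ℝ G ∧ Convex ℝ G)
    (F : Ω → Set X) (hFwc : ∀ ω, IsWeaklyCompact (F ω))
    (hFmeas : ∀ C : Set X, Convex ℝ C → IsClosed C → MeasurableSet {ω | F ω ⊆ C}) :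
    ∀ δ : ℝ, 0 < δ → ∃ A : Set Ω, MeasurableSet A ∧ 1 - ENNReal.ofReal δ ≤ μ A ∧
      ∃ W : Set X, IsWeaklyCompact W ∧ ∀ ω ∈ A, F ω ⊆ W := by
  intro δ hδ
  set C : ℕ → ℕ → Set X := fun k n => (n : ℝ) • G + Metric.closedBall 0 (1 / (k + 1))
  set S : ℕ → ℕ → Set Ω := fun k n => {ω | F ω ⊆ C k n}
  have hS : ∀ k n, MeasurableSet (S k n) := fun k n =>
    hFmeas _ ((hGconv.2.smul _).add (convex_closedBall _ _))
      ((hG.1.smul _).isClosed_add (convex_closedBall _ _) Metric.isClosed_closedBall)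
  have hS_mono : ∀ k, Monotone (S k) := fun k a b hab ω hω =>
    hω.trans (add_subset_add_right (hGconv.1.smul_mono (by simpa using hab)))
  have hS_cover : ∀ k, ⋃ n, S k n = univ := fun k =>
    eq_univ_of_forall fun ω => mem_iUnion.2 (hG.2 _ (hFwc ω) _ Nat.one_div_pos_of_nat)
  obtain ⟨n, hn⟩ := exists_measure_compl_iInter_le (μ := μ) hS hS_mono hS_cover
    (ENNReal.ofReal_pos.2 hδ).ne'
  obtain ⟨W, hW, hCW⟩ := exists_isWeaklyCompact_superset_of_subset_add_closedBall
    (W₀ := ⋂ k, C k (n k)) fun ε hε => by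
      obtain ⟨k, hk⟩ := exists_nat_one_div_lt hε
      exact ⟨_, hG.1.smul (n k), (iInter_subset _ k).trans
        (add_subset_add_left (Metric.closedBall_subset_closedBall hk.le))⟩
  refine ⟨⋂ k, S k (n k), .iInter fun k => hS k _, ?_, W, hW, fun ω hω => ?_⟩
  · rw [prob_compl_eq_one_sub (.iInter fun k => hS k _)] at hn
    exact tsub_le_iff_left.2 (tsub_le_iff_right.1 hn)
  · exact (subset_iInter (mem_iInter.1 hω)).trans hCW

/-- If `X` is SWCG and `F : Ω → wk(X)` is a multifunction with weakly compact nonempty values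
such that `{ω | F ω ⊆ C}` is measurable for every closed convex `C`, then for every `δ > 0`
there are `A ∈ Σ` with `μ A ≥ 1 - δ` and a weakly compact `W` with `F ω ⊆ W` for `ω ∈ A`. -/
theorem exists_weaklyCompact_of_multifunction (μ : Measure Ω) [IsProbabilityMeasure μ]
    [CompleteSpace X] (G : Set X) (hG : StronglyGenerates G)
    (hGconv : Balanced ℝ G ∧ Convex ℝ G)
    (F : Ω → Set X) (hFwc : ∀ ω, IsWeaklyCompact (F ω)) (hFne : ∀ ω, (F ω).Nonempty)
    (hFmeas : ∀ C : Set X, Convex ℝ C → IsClosed C → MeasurableSet {ω | F ω ⊆ C}) :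
    ∀ δ : ℝ, 0 < δ → ∃ A : Set Ω, MeasurableSet A ∧ 1 - ENNReal.ofReal δ ≤ μ A ∧
      ∃ W : Set X, IsWeaklyCompact W ∧ ∀ ω ∈ A, F ω ⊆ W :=
  exists_weaklyCompact_of_multifunction_general μ G hG hGconv F hFwc hFmeas
end
end

section
/- Let T be the dyadic tree ⋃_{n∈ℕ} {0,1}ⁿ and E the completion of c₀₀(T) under the norm ‖x‖_E = sup_n ( Σ_{σ∈{0,1}ⁿ} (sup_{τ⪰σ} |x(τ)|)² )^{1/2}. Then for any infinite sequence (σ_k) of pairwise distinct elements of T, the sequence of biorthogonal functionals (e*_{σ_k}) is weak*-null in E* and satisfies ‖e*_{σ_k}‖ = 1 for all k; consequently (e*_{σ_k}) has no norm-convergent subsequence. -/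
open MeasureTheory Filter Set ENNReal

noncomputable section

/-- The dyadic tree `T = ⋃ₙ {0,1}ⁿ`: nonempty finite sequences of `0`s and `1`s. -/
def DyadicTree : Type := {l : List Bool // l ≠ []}

/-- `τ ⪰ σ` iff `τ` extends `σ`. -/
def DyadicTree.Ext (σ τ : DyadicTree) : Prop := σ.1 <+: τ.1

/-!
For finitely supported `a`, the level of the tree containing `σ` already shows
`|a σ| ≤ ‖∑ a τ • e τ‖`, while for `a = single σ 1` every level carries at most one nonzero term,
so `‖e σ‖ ≤ 1`. Hence each `e*_σ` has norm one, and `(e*_σ - e*_τ)(e_σ) = 1` gives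
`‖e*_σ - e*_τ‖ ≥ 1` for `σ ≠ τ`, which rules out Cauchy subsequences. On the dense span,
`e*_{σ_k} x` is eventually zero because `x` has finitely many nonzero coordinates, and the uniform
bound `‖e*_σ‖ ≤ 1` carries this to all of `E`.
-/

open Finsupp

theorem Finsupp.abs_apply_le_sum_abs {α : Type*} (a : α →₀ ℝ) (x : α) :
    |a x| ≤ ∑ y ∈ a.support, |a y| := by
  by_cases hx : x ∈ a.support
  · exact Finset.single_le_sum (fun y _ => abs_nonneg (a y)) hx
  · rw [notMem_support_iff.mp hx, abs_zero]
    exact Finset.sum_nonneg fun y _ => abs_nonneg (a y)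

theorem ContinuousLinearMap.opNorm_le_of_dense {𝕜 E F : Type*} [NontriviallyNormedField 𝕜]
    [SeminormedAddCommGroup E] [SeminormedAddCommGroup F] [NormedSpace 𝕜 E] [NormedSpace 𝕜 F]
    (g : E →L[𝕜] F) {s : Set E} (hs : Dense s) {C : ℝ} (hC : 0 ≤ C)
    (h : ∀ x ∈ s, ‖g x‖ ≤ C * ‖x‖) : ‖g‖ ≤ C :=
  g.opNorm_le_bound hC (hs.induction h (isClosed_le (by fun_prop) (by fun_prop)))

theorem ContinuousLinearMap.one_le_opNorm_of_apply_eq_one {𝕜 E F : Type*}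
    [NontriviallyNormedField 𝕜] [SeminormedAddCommGroup E] [SeminormedAddCommGroup F]
    [NormedSpace 𝕜 E] [NormedSpace 𝕜 F] (g : E →L[𝕜] F) {x : E} (hx : ‖x‖ ≤ 1) {y : F}
    (hy : ‖y‖ = 1) (hgx : g x = y) : 1 ≤ ‖g‖ :=
  calc 1 = ‖g x‖ := by rw [hgx, hy]
    _ ≤ ‖g‖ * ‖x‖ := g.le_opNorm x
    _ ≤ ‖g‖ := mul_le_of_le_one_right (norm_nonneg g) hx

theorem ContinuousLinearMap.tendsto_apply_zero_of_dense {ι 𝕜 E F : Type*}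
    [NontriviallyNormedField 𝕜] [SeminormedAddCommGroup E] [SeminormedAddCommGroup F]
    [NormedSpace 𝕜 E] [NormedSpace 𝕜 F] {l : Filter ι} {f : ι → E →L[𝕜] F} {C : ℝ}
    (hf : ∀ i, ‖f i‖ ≤ C) {s : Set E} (hs : Dense s)
    (h : ∀ x ∈ s, Tendsto (fun i => f i x) l (nhds 0)) (x : E) :
    Tendsto (fun i => f i x) l (nhds 0) :=
  -- a norm-bounded family is equicontinuous, so the set where it converges is closed
  have hequi : Equicontinuous ((↑) ∘ f) :=
    ((NormedSpace.equicontinuous_TFAE f).out 5 1).mp (⟨C, hf⟩ : ∃ C, ∀ i, ‖f i‖ ≤ C)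
  hs.induction (P := fun x => Tendsto (fun i => f i x) l (nhds 0)) h
    (hequi.isClosed_setOfPred_tendsto (f := fun _ => 0) continuous_const) x

theorem not_cauchySeq_of_pairwise_le_dist {X : Type*} [PseudoMetricSpace X] {u : ℕ → X} {δ : ℝ}
    (hδ : 0 < δ) (hu : Pairwise fun i j => δ ≤ dist (u i) (u j)) : ¬ CauchySeq u := by
  intro hcauchy
  obtain ⟨N, hN⟩ := Metric.cauchySeq_iff'.mp hcauchy δ hδ
  exact (hN (N + 1) N.le_succ).not_ge (hu N.succ_ne_self)

theorem Finsupp.tendsto_comp_of_injective {α M : Type*} [AddCommGroup M] [TopologicalSpace M]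
    [IsTopologicalAddGroup M] (a : α →₀ M) {u : ℕ → α} (hu : Function.Injective u) :
    Tendsto (fun k => a (u k)) atTop (nhds 0) :=
  Nat.cofinite_eq_atTop ▸
    (summable_of_hasFiniteSupport a.hasFiniteSupport).tendsto_cofinite_zero.comp hu.tendsto_cofinite

section Biorthogonal

variable {ι E : Type*} [NormedAddCommGroup E] [NormedSpace ℝ E] {e : ι → E}
  {f : ι → E →L[ℝ] ℝ}

theorem apply_linearCombination_of_biorthogonal (h1 : ∀ i, f i (e i) = 1)
    (h0 : ∀ i j, i ≠ j → f i (e j) = 0) (i : ι) (a : ι →₀ ℝ) :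
    f i (linearCombination ℝ e a) = a i := by
  classical
  suffices (f i).toLinearMap ∘ₗ linearCombination ℝ e = lapply i from LinearMap.congr_fun this a
  refine lhom_ext fun j c => ?_
  by_cases hij : i = j
  · subst hij; simp [h1]
  · simp [h0 i j hij, Ne.symm hij]

theorem opNorm_le_one_of_biorthogonal (h1 : ∀ i, f i (e i) = 1)
    (h0 : ∀ i j, i ≠ j → f i (e j) = 0) (hspan : Dense (Submodule.span ℝ (range e) : Set E))
    (hcoord : ∀ (a : ι →₀ ℝ) i, |a i| ≤ ‖linearCombination ℝ e a‖) (i : ι) : ‖f i‖ ≤ 1 := by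
  refine (f i).opNorm_le_of_dense hspan zero_le_one fun x hx => ?_
  obtain ⟨a, rfl⟩ := mem_span_range_iff_exists_finsupp.mp hx
  rw [← linearCombination_apply, apply_linearCombination_of_biorthogonal h1 h0, one_mul]
  exact hcoord a i

theorem one_le_opNorm_sub_of_biorthogonal (h1 : ∀ i, f i (e i) = 1)
    (h0 : ∀ i j, i ≠ j → f i (e j) = 0) (he : ∀ i, ‖e i‖ ≤ 1) {i j : ι} (hij : i ≠ j) :
    1 ≤ ‖f i - f j‖ :=
  (f i - f j).one_le_opNorm_of_apply_eq_one (he i) norm_one (by simp [h1, h0 j i hij.symm])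

theorem tendsto_apply_zero_of_biorthogonal (h1 : ∀ i, f i (e i) = 1)
    (h0 : ∀ i j, i ≠ j → f i (e j) = 0) (hspan : Dense (Submodule.span ℝ (range e) : Set E))
    (hf : ∀ i, ‖f i‖ ≤ 1) {u : ℕ → ι} (hu : Function.Injective u) (x : E) :
    Tendsto (fun k => f (u k) x) atTop (nhds 0) := by
  refine ContinuousLinearMap.tendsto_apply_zero_of_dense (fun k => hf (u k)) hspan
    (fun y hy => ?_) x
  obtain ⟨a, rfl⟩ := mem_span_range_iff_exists_finsupp.mp hy
  simpa only [← linearCombination_apply, apply_linearCombination_of_biorthogonal h1 h0]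
    using a.tendsto_comp_of_injective hu

end Biorthogonal

namespace DyadicTree

theorem Ext.refl (σ : DyadicTree) : σ.Ext σ := List.prefix_refl σ.1

theorem eq_of_ext_of_length_eq {σ ρ τ : DyadicTree} (hσ : σ.Ext τ) (hρ : ρ.Ext τ)
    (h : σ.1.length = ρ.1.length) : σ = ρ :=
  Subtype.ext ((List.prefix_of_prefix_length_le hσ hρ h.le).eq_of_length h)

abbrev Level (n : ℕ) : Type := {σ : DyadicTree // σ.1.length = n + 1}

theorem exists_level (σ : DyadicTree) : ∃ n, σ.1.length = n + 1 :=
  Nat.exists_eq_add_one.mpr (List.length_pos_iff.mpr σ.2)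

theorem subsingleton_setOf_ext (n : ℕ) (τ : DyadicTree) :
    {σ : Level n | σ.1.Ext τ}.Subsingleton := fun σ hσ ρ hρ =>
  Subtype.ext <| eq_of_ext_of_length_eq hσ hρ (σ.2.trans ρ.2.symm)

variable (a : DyadicTree →₀ ℝ)

def tailSup (σ : DyadicTree) : ℝ := sSup {r : ℝ | ∃ τ : DyadicTree, σ.Ext τ ∧ r = |a τ|}

def levelNorm (n : ℕ) : ℝ := √(∑' σ : Level n, tailSup a σ.1 ^ 2)

theorem abs_le_tailSup {σ τ : DyadicTree} (h : σ.Ext τ) : |a τ| ≤ tailSup a σ :=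
  le_csSup ⟨∑ y ∈ a.support, |a y|, by rintro r ⟨τ, -, rfl⟩; exact a.abs_apply_le_sum_abs τ⟩
    ⟨τ, h, rfl⟩

theorem tailSup_nonneg (σ : DyadicTree) : 0 ≤ tailSup a σ :=
  (abs_nonneg _).trans (abs_le_tailSup a (Ext.refl σ))

theorem tailSup_le_sum_abs (σ : DyadicTree) : tailSup a σ ≤ ∑ y ∈ a.support, |a y| :=
  csSup_le ⟨_, σ, Ext.refl σ, rfl⟩ (by rintro r ⟨τ, -, rfl⟩; exact a.abs_apply_le_sum_abs τ)

theorem exists_mem_support_ext {σ : DyadicTree} (h : tailSup a σ ≠ 0) :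
    ∃ τ ∈ a.support, σ.Ext τ := by
  by_contra! hσ
  refine h (le_antisymm (csSup_le ⟨_, σ, Ext.refl σ, rfl⟩ ?_) (tailSup_nonneg a σ))
  rintro r ⟨τ, hτ, rfl⟩
  by_cases hτa : τ ∈ a.support
  · exact absurd hτ (hσ τ hτa)
  · rw [notMem_support_iff.mp hτa, abs_zero]

theorem finite_setOf_tailSup_ne_zero (n : ℕ) :
    {σ : Level n | tailSup a σ.1 ≠ 0}.Finite := by
  refine (a.support.finite_toSet.biUnion fun τ _ => (subsingleton_setOf_ext n τ).finite).subset
    fun σ hσ => ?_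
  obtain ⟨τ, hτ, hστ⟩ := exists_mem_support_ext a hσ
  exact Set.mem_biUnion hτ hστ

theorem card_le_card_support {n : ℕ} (s : Finset (Level n)) (hs : ∀ σ ∈ s, tailSup a σ.1 ≠ 0) :
    s.card ≤ a.support.card :=
  Finset.card_le_card_of_forall_subsingleton (fun σ τ => σ.1.Ext τ)
    (fun σ hσ => exists_mem_support_ext a (hs σ hσ))
    fun τ _ _ hσ _ hρ => subsingleton_setOf_ext n τ hσ.2 hρ.2

theorem summable_sq_tailSup (n : ℕ) : Summable fun σ : Level n => tailSup a σ.1 ^ 2 :=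
  summable_of_hasFiniteSupport <| (finite_setOf_tailSup_ne_zero a n).subset fun _ hσ =>
    pow_ne_zero_iff two_ne_zero |>.mp hσ

theorem tsum_sq_tailSup_le (n : ℕ) :
    ∑' σ : Level n, tailSup a σ.1 ^ 2 ≤ a.support.card * (∑ y ∈ a.support, |a y|) ^ 2 := by
  set s := (finite_setOf_tailSup_ne_zero a n).toFinset
  rw [tsum_eq_sum (s := s) fun σ hσ => by simpa [s] using hσ]
  calc ∑ σ ∈ s, tailSup a σ.1 ^ 2
      ≤ s.card • (∑ y ∈ a.support, |a y|) ^ 2 := Finset.sum_le_card_nsmul _ _ _ fun σ _ =>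
        pow_le_pow_left₀ (tailSup_nonneg a σ.1) (tailSup_le_sum_abs a σ.1) 2
    _ ≤ a.support.card * (∑ y ∈ a.support, |a y|) ^ 2 := by
        rw [nsmul_eq_mul]
        gcongr
        exact_mod_cast card_le_card_support a s fun σ hσ => by simpa [s] using hσ

/- Beyond bounding `‖e σ‖`, this makes `⨆ n, levelNorm a n` a genuine supremum: the `ciSup` of an
unbounded family is `0`. -/
theorem levelNorm_le (n : ℕ) :
    levelNorm a n ≤ √(a.support.card * (∑ y ∈ a.support, |a y|) ^ 2) :=
  Real.sqrt_le_sqrt (tsum_sq_tailSup_le a n)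

theorem abs_le_iSup_levelNorm (σ : DyadicTree) : |a σ| ≤ ⨆ n, levelNorm a n := by
  obtain ⟨n, hn⟩ := exists_level σ
  calc |a σ| ≤ tailSup a σ := abs_le_tailSup a (Ext.refl σ)
    _ = √(tailSup a σ ^ 2) := (Real.sqrt_sq (tailSup_nonneg a σ)).symm
    _ ≤ levelNorm a n :=
        Real.sqrt_le_sqrt ((summable_sq_tailSup a n).le_tsum ⟨σ, hn⟩ fun _ _ => sq_nonneg _)
    _ ≤ ⨆ n, levelNorm a n := le_ciSup ⟨_, Set.forall_mem_range.mpr (levelNorm_le a)⟩ n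

theorem iSup_levelNorm_single_le (σ : DyadicTree) : ⨆ n, levelNorm (single σ 1) n ≤ 1 :=
  ciSup_le fun n => (levelNorm_le _ n).trans_eq (by simp)

section Basis

variable {E : Type*} [NormedAddCommGroup E] [NormedSpace ℝ E] {e : DyadicTree → E}

theorem norm_le_one (he : ∀ a, ‖linearCombination ℝ e a‖ = ⨆ n, levelNorm a n)
    (σ : DyadicTree) : ‖e σ‖ ≤ 1 := by
  have h := he (single σ 1)
  rw [linearCombination_single, one_smul] at h
  exact h ▸ iSup_levelNorm_single_le σ

theorem abs_apply_le_norm_linearCombination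
    (he : ∀ a, ‖linearCombination ℝ e a‖ = ⨆ n, levelNorm a n) (a : DyadicTree →₀ ℝ)
    (σ : DyadicTree) : |a σ| ≤ ‖linearCombination ℝ e a‖ :=
  he a ▸ abs_le_iSup_levelNorm a σ

end Basis

end DyadicTree

theorem talagrand_biorthogonal_weakStar_null_general
    {E : Type*} [NormedAddCommGroup E] [NormedSpace ℝ E]
    (e : DyadicTree → E)
    -- the norm of a finitely supported combination is given by Talagrand's formula
    (hnorm : ∀ a : DyadicTree →₀ ℝ, ‖∑ σ ∈ a.support, a σ • e σ‖ =
      ⨆ n : ℕ, Real.sqrt (∑' σ : {σ : DyadicTree // σ.1.length = n + 1},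
        (sSup {r : ℝ | ∃ τ : DyadicTree, σ.1.Ext τ ∧ r = |a τ|}) ^ 2))
    -- the span of the basis vectors is dense in `E`
    (hdense : (Submodule.span ℝ (Set.range e)).topologicalClosure = ⊤)
    -- biorthogonal functionals
    (estar : DyadicTree → E →L[ℝ] ℝ)
    (hbi1 : ∀ σ : DyadicTree, estar σ (e σ) = 1)
    (hbi0 : ∀ σ τ : DyadicTree, σ ≠ τ → estar σ (e τ) = 0)
    (σk : ℕ → DyadicTree) (hinj : Function.Injective σk) :
    (∀ k : ℕ, ‖estar (σk k)‖ = 1) ∧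
    (∀ x : E, Tendsto (fun k => estar (σk k) x) atTop (nhds 0)) ∧
    ¬ ∃ (φ : ℕ → ℕ) (g : E →L[ℝ] ℝ), StrictMono φ ∧
        Tendsto (fun k => ‖estar (σk (φ k)) - g‖) atTop (nhds 0) := by
  have hnorm' (a : DyadicTree →₀ ℝ) :
      ‖linearCombination ℝ e a‖ = ⨆ n, DyadicTree.levelNorm a n := by
    rw [linearCombination_apply]; exact hnorm a
  have hspan := Submodule.dense_iff_topologicalClosure_eq_top.mpr hdense
  have he := DyadicTree.norm_le_one hnorm'
  have hle := opNorm_le_one_of_biorthogonal hbi1 hbi0 hspan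
    (DyadicTree.abs_apply_le_norm_linearCombination hnorm')
  refine ⟨fun k => (hle _).antisymm
      ((estar _).one_le_opNorm_of_apply_eq_one (he _) norm_one (hbi1 _)),
    tendsto_apply_zero_of_biorthogonal hbi1 hbi0 hspan hle hinj, ?_⟩
  rintro ⟨φ, g, hφ, hconv⟩
  refine not_cauchySeq_of_pairwise_le_dist one_pos (fun i j hij => ?_)
    (tendsto_iff_norm_sub_tendsto_zero.mpr hconv).cauchySeq
  exact (one_le_opNorm_sub_of_biorthogonal hbi1 hbi0 he (hinj.ne (hφ.injective.ne hij))).trans_eq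
    (dist_eq_norm _ _).symm

/-- In the Talagrand space `E` (completion of `c₀₀(T)` under
`‖x‖ = supₙ (Σ_{σ∈{0,1}ⁿ} (sup_{τ⪰σ} |x τ|)²)^{1/2}`), for any sequence of pairwise
distinct nodes the biorthogonal functionals `e*_{σ_k}` are weak*-null, have norm one, and
admit no norm-convergent subsequence. -/
theorem talagrand_biorthogonal_weakStar_null
    {E : Type*} [NormedAddCommGroup E] [NormedSpace ℝ E] [CompleteSpace E]
    (e : DyadicTree → E)
    -- the norm of a finitely supported combination is given by Talagrand's formula
    (hnorm : ∀ a : DyadicTree →₀ ℝ, ‖∑ σ ∈ a.support, a σ • e σ‖ =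
      ⨆ n : ℕ, Real.sqrt (∑' σ : {σ : DyadicTree // σ.1.length = n + 1},
        (sSup {r : ℝ | ∃ τ : DyadicTree, σ.1.Ext τ ∧ r = |a τ|}) ^ 2))
    -- the span of the basis vectors is dense in `E`
    (hdense : (Submodule.span ℝ (Set.range e)).topologicalClosure = ⊤)
    -- biorthogonal functionals
    (estar : DyadicTree → E →L[ℝ] ℝ)
    (hbi1 : ∀ σ : DyadicTree, estar σ (e σ) = 1)
    (hbi0 : ∀ σ τ : DyadicTree, σ ≠ τ → estar σ (e τ) = 0)
    (σk : ℕ → DyadicTree) (hinj : Function.Injective σk) :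
    (∀ k : ℕ, ‖estar (σk k)‖ = 1) ∧
    (∀ x : E, Tendsto (fun k => estar (σk k) x) atTop (nhds 0)) ∧
    ¬ ∃ (φ : ℕ → ℕ) (g : E →L[ℝ] ℝ), StrictMono φ ∧
        Tendsto (fun k => ‖estar (σk (φ k)) - g‖) atTop (nhds 0) :=
  talagrand_biorthogonal_weakStar_null_general e hnorm hdense estar hbi1 hbi0 σk hinj
end
end

section
/- Let X₀ be the Batt–Hiermeyer space: the space of x: T → ℝ with ‖x‖ = sup { (Σ_{i=1}^n (Σ_{σ∈C_i} |x(σ)|)²)^{1/2} } finite, the supremum over finite families of pairwise disjoint finite chains C_1,…,C_n of the dyadic tree T. If (σ_n) is an infinite antichain of T, then the sequence (e_{σ_n}) in X₀ is equivalent to the standard unit vector basis of ℓ²; in particular (e_{σ_n}) is weakly null. -/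
/-! A chain meets an antichain in at most one point. So when `x` is supported on an antichain, each
chain in a Batt–Hiermeyer family contributes at most one square `x(σ)²`, and disjoint chains
contribute distinct ones; the family of singletons attains `Σ x(σ)²`. Hence the norm on the span
of `(e_{σ_n})` is the `ℓ²` norm. The upper `ℓ²` estimate gives the Bessel-type inequality
`Σₙ g(e_{σ_n})² ≤ ‖g‖²` for every functional `g`, so `g(e_{σ_n}) → 0`. -/

open MeasureTheory Filter Set ENNReal

noncomputable section

/-- `σ` and `τ` are comparable in the extension order of the dyadic tree. -/
def DyadicTree.Comparable (σ τ : DyadicTree) : Prop := σ.1 <+: τ.1 ∨ τ.1 <+: σ.1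

/-- The Batt–Hiermeyer norm of `b` is the supremum of this set. -/
def disjointChainNorms {α : Type*} (R : α → α → Prop) (b : α → ℝ) : Set ℝ :=
  {r : ℝ | ∃ 𝒞 : Finset (Finset α),
    (∀ C ∈ 𝒞, (C : Set α).Pairwise R) ∧
    ((𝒞 : Set (Finset α)).Pairwise fun C D => Disjoint C D) ∧
    r = Real.sqrt (∑ C ∈ 𝒞, (∑ τ ∈ C, |b τ|) ^ 2)}

section Antichain

variable {α : Type*} {R : α → α → Prop} {b : α →₀ ℝ}

-- A chain meets the antichain `b.support` in at most one point.
theorem sq_sum_abs_eq_sum_sq_of_isAntichain (hb : IsAntichain R (b.support : Set α))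
    {C : Finset α} (hC : (C : Set α).Pairwise R) :
    (∑ τ ∈ C, |b τ|) ^ 2 = ∑ τ ∈ C, b τ ^ 2 := by
  by_cases h : ∃ x ∈ C, b x ≠ 0
  · obtain ⟨x, hxC, hx⟩ := h
    have hzero : ∀ y ∈ C, y ≠ x → b y = 0 := fun y hyC hyx => by
      by_contra hy
      exact hb (Finsupp.mem_support_iff.mpr hy) (Finsupp.mem_support_iff.mpr hx) hyx
        (hC hyC hxC hyx)
    rw [Finset.sum_eq_single_of_mem x hxC fun y hyC hyx => by simp [hzero y hyC hyx],
      Finset.sum_eq_single_of_mem x hxC fun y hyC hyx => by simp [hzero y hyC hyx], sq_abs]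
  · push Not at h
    rw [Finset.sum_eq_zero fun x hx => by simp [h x hx],
      Finset.sum_eq_zero fun x hx => by simp [h x hx], zero_pow two_ne_zero]

theorem sum_sq_sum_abs_le_of_isAntichain (hb : IsAntichain R (b.support : Set α))
    {𝒞 : Finset (Finset α)} (hchain : ∀ C ∈ 𝒞, (C : Set α).Pairwise R)
    (hdisj : (𝒞 : Set (Finset α)).Pairwise fun C D => Disjoint C D) :
    ∑ C ∈ 𝒞, (∑ τ ∈ C, |b τ|) ^ 2 ≤ ∑ τ ∈ b.support, b τ ^ 2 := by
  classical
  have hdisj : (𝒞 : Set (Finset α)).PairwiseDisjoint id := hdisj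
  calc ∑ C ∈ 𝒞, (∑ τ ∈ C, |b τ|) ^ 2
      = ∑ τ ∈ 𝒞.disjiUnion id hdisj, b τ ^ 2 := by
        rw [Finset.sum_disjiUnion]
        exact Finset.sum_congr rfl fun C hC => sq_sum_abs_eq_sum_sq_of_isAntichain hb (hchain C hC)
    _ = ∑ τ ∈ 𝒞.disjiUnion id hdisj with b τ ^ 2 ≠ 0, b τ ^ 2 := (Finset.sum_filter_ne_zero _).symm
    _ ≤ ∑ τ ∈ b.support, b τ ^ 2 :=
        Finset.sum_le_sum_of_subset_of_nonneg (fun τ hτ => by simp_all)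
          fun τ _ _ => sq_nonneg _

theorem sqrt_sum_sq_mem_disjointChainNorms :
    Real.sqrt (∑ τ ∈ b.support, b τ ^ 2) ∈ disjointChainNorms R b := by
  refine ⟨b.support.map ⟨({·}), Finset.singleton_injective⟩, ?_, ?_, ?_⟩
  · simp
  · simp only [Finset.coe_map, Function.Embedding.coeFn_mk]
    rintro _ ⟨x, -, rfl⟩ _ ⟨y, -, rfl⟩ hxy
    exact Finset.disjoint_singleton.mpr fun h => hxy (congrArg _ h)
  · simp [sq_abs]

theorem sSup_disjointChainNorms_of_isAntichain (hb : IsAntichain R (b.support : Set α)) :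
    sSup (disjointChainNorms R b) = Real.sqrt (∑ τ ∈ b.support, b τ ^ 2) := by
  refine IsGreatest.csSup_eq ⟨sqrt_sum_sq_mem_disjointChainNorms, ?_⟩
  rintro r ⟨𝒞, hchain, hdisj, rfl⟩
  exact Real.sqrt_le_sqrt (sum_sq_sum_abs_le_of_isAntichain hb hchain hdisj)

end Antichain

section UpperEllTwoEstimate

variable {ι E : Type*} [NormedAddCommGroup E] [NormedSpace ℝ E] {x : ι → E}

theorem sum_sq_apply_le_sq_opNorm
    (hx : ∀ a : ι →₀ ℝ, ‖∑ i ∈ a.support, a i • x i‖ ≤ Real.sqrt (∑ i ∈ a.support, a i ^ 2))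
    (g : E →L[ℝ] ℝ) (s : Finset ι) : ∑ i ∈ s, g (x i) ^ 2 ≤ ‖g‖ ^ 2 := by
  set Q := ∑ i ∈ s, g (x i) ^ 2
  set a : ι →₀ ℝ := Finsupp.indicator s fun i _ => g (x i)
  have ha : ∀ i ∈ s, a i = g (x i) := fun i hi => Finsupp.indicator_of_mem hi _
  have hsupp : a.support ⊆ s := Finsupp.support_indicator_subset _ _
  have hcomb : ∑ i ∈ a.support, a i • x i = ∑ i ∈ s, g (x i) • x i :=
    (a.sum_of_support_subset hsupp (fun i c => c • x i) fun _ _ => zero_smul _ _).trans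
      (Finset.sum_congr rfl fun i hi => by rw [ha i hi])
  have hsq : ∑ i ∈ a.support, a i ^ 2 = Q :=
    (a.sum_of_support_subset hsupp (fun _ c => c ^ 2) fun _ _ => zero_pow two_ne_zero).trans
      (Finset.sum_congr rfl fun i hi => by rw [ha i hi])
  have hQ : Q ≤ ‖g‖ * Real.sqrt Q :=
    calc Q = g (∑ i ∈ s, g (x i) • x i) := by simp [Q, sq]
      _ ≤ ‖g‖ * ‖∑ i ∈ s, g (x i) • x i‖ := (le_abs_self _).trans (g.le_opNorm _)
      _ ≤ ‖g‖ * Real.sqrt Q := by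
        rw [← hcomb, ← hsq]
        exact mul_le_mul_of_nonneg_left (hx a) (norm_nonneg g)
  -- `Q ≤ ‖g‖ √Q` forces `√Q ≤ ‖g‖`
  nlinarith [Real.sq_sqrt (show 0 ≤ Q by positivity), sq_nonneg (‖g‖ - Real.sqrt Q)]

theorem tendsto_apply_zero_of_norm_sum_le {x : ℕ → E}
    (hx : ∀ a : ℕ →₀ ℝ, ‖∑ n ∈ a.support, a n • x n‖ ≤ Real.sqrt (∑ n ∈ a.support, a n ^ 2))
    (g : E →L[ℝ] ℝ) : Tendsto (fun n => g (x n)) atTop (nhds 0) := by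
  have hsummable : Summable fun n => g (x n) ^ 2 :=
    summable_of_sum_range_le (fun _ => sq_nonneg _)
      fun n => sum_sq_apply_le_sq_opNorm hx g (Finset.range n)
  have habs := (Real.continuous_sqrt.tendsto 0).comp hsummable.tendsto_atTop_zero
  simp only [Function.comp_def, Real.sqrt_sq_eq_abs, Real.sqrt_zero] at habs
  exact tendsto_zero_iff_abs_tendsto_zero _ |>.mpr habs

end UpperEllTwoEstimate

theorem battHiermeyer_antichain_ell2_general
    {X₀ : Type*} [NormedAddCommGroup X₀] [NormedSpace ℝ X₀]
    (e : DyadicTree → X₀)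
    -- the norm of a finitely supported combination is given by the Batt–Hiermeyer formula
    (hnorm : ∀ a : DyadicTree →₀ ℝ, ‖∑ σ ∈ a.support, a σ • e σ‖ =
      sSup {r : ℝ | ∃ 𝒞 : Finset (Finset DyadicTree),
        (∀ C ∈ 𝒞, (C : Set DyadicTree).Pairwise DyadicTree.Comparable) ∧
        ((𝒞 : Set (Finset DyadicTree)).Pairwise fun C D => Disjoint C D) ∧
        r = Real.sqrt (∑ C ∈ 𝒞, (∑ σ ∈ C, |a σ|) ^ 2)})
    (σ : ℕ → DyadicTree) (hinj : Function.Injective σ)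
    -- `(σ n)` is an antichain: distinct elements are incomparable
    (hanti : ∀ m n : ℕ, m ≠ n → ¬ DyadicTree.Comparable (σ m) (σ n)) :
    (∀ a : ℕ →₀ ℝ, ‖∑ n ∈ a.support, a n • e (σ n)‖ =
      Real.sqrt (∑ n ∈ a.support, (a n) ^ 2)) ∧
    ∀ g : X₀ →L[ℝ] ℝ, Tendsto (fun n => g (e (σ n))) atTop (nhds 0) := by
  have hℓ2 : ∀ a : ℕ →₀ ℝ, ‖∑ n ∈ a.support, a n • e (σ n)‖ =
      Real.sqrt (∑ n ∈ a.support, (a n) ^ 2) := by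
    intro a
    set b := a.embDomain ⟨σ, hinj⟩
    have hb : IsAntichain DyadicTree.Comparable (b.support : Set DyadicTree) := by
      rw [Finsupp.support_embDomain, Finset.coe_map]
      rintro _ ⟨m, -, rfl⟩ _ ⟨n, -, rfl⟩ hmn
      exact hanti m n (ne_of_apply_ne σ hmn)
    calc ‖∑ n ∈ a.support, a n • e (σ n)‖ = ‖∑ τ ∈ b.support, b τ • e τ‖ :=
          congrArg norm (a.sum_embDomain (f := ⟨σ, hinj⟩) (g := fun τ c => c • e τ)).symm
      _ = sSup (disjointChainNorms DyadicTree.Comparable b) := hnorm b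
      _ = Real.sqrt (∑ τ ∈ b.support, b τ ^ 2) := sSup_disjointChainNorms_of_isAntichain hb
      _ = Real.sqrt (∑ n ∈ a.support, a n ^ 2) :=
          congrArg Real.sqrt (a.sum_embDomain (f := ⟨σ, hinj⟩) (g := fun _ c => c ^ 2))
  exact ⟨hℓ2, tendsto_apply_zero_of_norm_sum_le fun a => (hℓ2 a).le⟩

/-- In the Batt–Hiermeyer space `X₀` (functions `x : T → ℝ` with
`‖x‖ = sup (Σᵢ (Σ_{σ∈Cᵢ} |x σ|)²)^{1/2}`, the sup over finite families of pairwise disjoint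
finite chains), the unit vectors along any infinite antichain are equivalent to the standard
basis of `ℓ²`; in particular they form a weakly null sequence. -/
theorem battHiermeyer_antichain_ell2
    {X₀ : Type*} [NormedAddCommGroup X₀] [NormedSpace ℝ X₀] [CompleteSpace X₀]
    (e : DyadicTree → X₀)
    -- the norm of a finitely supported combination is given by the Batt–Hiermeyer formula
    (hnorm : ∀ a : DyadicTree →₀ ℝ, ‖∑ σ ∈ a.support, a σ • e σ‖ =
      sSup {r : ℝ | ∃ 𝒞 : Finset (Finset DyadicTree),
        (∀ C ∈ 𝒞, (C : Set DyadicTree).Pairwise DyadicTree.Comparable) ∧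
        ((𝒞 : Set (Finset DyadicTree)).Pairwise fun C D => Disjoint C D) ∧
        r = Real.sqrt (∑ C ∈ 𝒞, (∑ σ ∈ C, |a σ|) ^ 2)})
    (σ : ℕ → DyadicTree) (hinj : Function.Injective σ)
    -- `(σ n)` is an antichain: distinct elements are incomparable
    (hanti : ∀ m n : ℕ, m ≠ n → ¬ DyadicTree.Comparable (σ m) (σ n)) :
    (∀ a : ℕ →₀ ℝ, ‖∑ n ∈ a.support, a n • e (σ n)‖ =
      Real.sqrt (∑ n ∈ a.support, (a n) ^ 2)) ∧
    ∀ g : X₀ →L[ℝ] ℝ, Tendsto (fun n => g (e (σ n))) atTop (nhds 0) :=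
  battHiermeyer_antichain_ell2_general e hnorm σ hinj hanti
end
end
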